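/- Let H be a Hopf algebra over a field k and P = ΣP₁⊗P₂ ∈ H ⊗ H satisfying Σ P₁S²(h₍₁₎) ⊗ P₂h₍₂₎ = Σ h₍₁₎P₁ ⊗ h₍₂₎P₂ for all h ∈ H. Define Φ_P : H* → H by Φ_P(ξ) = Σ ξ(P₁)P₂. Then: (i) Φ_P(h ⋄ ξ) = (ad h)(Φ_P(ξ)) for all h ∈ H and ξ ∈ H*, where (h ⋄ ξ)(x) = ξ(S(h₍₁₎) x S²(h₍₂₎)) and (ad h)(y) = h₍₁₎ y S(h₍₂₎); (ii) if ξ ∈ H* satisfies ξ(ab) = ξ(ba) for all a, b ∈ H, then Φ_P(ξ) lies in the center Z(H) of H. -/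

import Mathlib

open TensorProduct

noncomputable section

section HopfDefs

variable (k H : Type*) [Field k] [Ring H] [HopfAlgebra k H]

/-- The antipode, abbreviated. -/
def antip : H →ₗ[k] H := HopfAlgebra.antipode (R := k)

/-- The square of the antipode. -/
def antipSq : H →ₗ[k] H := antip k H ∘ₗ antip k H

/-- `sandwich (a ⊗ b)` is the linear endomorphism `x ↦ a * x * b` of `H`. -/
def sandwich : H ⊗[k] H →ₗ[k] Module.End k H :=
  TensorProduct.lift
    (LinearMap.mk₂ k
      (fun a b => LinearMap.mulRight k b ∘ₗ LinearMap.mulLeft k a)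
      (fun a a' b => by ext x; simp [add_mul])
      (fun c a b => by ext x; simp [smul_mul_assoc])
      (fun a b b' => by ext x; simp [mul_add])
      (fun c a b => by ext x; simp [mul_smul_comm]))

/-- `ad* h : x ↦ S(h₍₁₎) x S²(h₍₂₎)` (Sweedler sum understood). -/
def adStar (h : H) : Module.End k H :=
  sandwich k H (TensorProduct.map (antip k H) (antipSq k H) (Coalgebra.comul h))

/-- `ad h : y ↦ h₍₁₎ y S(h₍₂₎)` (Sweedler sum understood). -/
def adAct (h : H) : Module.End k H :=
  sandwich k H (TensorProduct.map LinearMap.id (antip k H) (Coalgebra.comul h))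

/-- For fixed `P = Σ P₁ ⊗ P₂ ∈ H ⊗ H`, the linear map sending
`(a ⊗ b) ⊗ c` to `Σ (a * P₁ * b) ⊗ (P₂ * c)`. -/
def thetaP (P : H ⊗[k] H) : (H ⊗[k] H) ⊗[k] H →ₗ[k] H ⊗[k] H :=
  TensorProduct.lift
    (LinearMap.mk₂ k
      (fun x c => TensorProduct.map (sandwich k H x) (LinearMap.mulRight k c) P)
      (fun x x' c => by
        simp only [map_add, TensorProduct.map_add_left, LinearMap.add_apply])
      (fun r x c => by
        simp only [map_smul, TensorProduct.map_smul_left, LinearMap.smul_apply])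
      (fun x c c' => by
        have h : LinearMap.mulRight k (c + c') =
            LinearMap.mulRight k c + LinearMap.mulRight k c' := by
          ext y; simp [mul_add]
        simp only [h, TensorProduct.map_add_right, LinearMap.add_apply])
      (fun r x c => by
        have h : LinearMap.mulRight k (r • c) = r • LinearMap.mulRight k c := by
          ext y; simp [mul_smul_comm]
        simp only [h, TensorProduct.map_smul_right, LinearMap.smul_apply]))

/-- Condition (a): `P · (S²⊗id)(Δ h) = Δ h · P` for all `h`. -/
def CondA (P : H ⊗[k] H) : Prop :=
  ∀ h : H,
    P * TensorProduct.map (antipSq k H) LinearMap.id (Coalgebra.comul h) =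
      Coalgebra.comul h * P

/-- Condition (b): `(1 ⊗ h) · P = Σ S(h₍₁₎) P₁ S²(h₍₂₎) ⊗ P₂ h₍₃₎` for all `h`. -/
def CondB (P : H ⊗[k] H) : Prop :=
  ∀ h : H,
    (1 ⊗ₜ[k] h) * P =
      thetaP k H P
        (TensorProduct.map (TensorProduct.map (antip k H) (antipSq k H)) LinearMap.id
          (TensorProduct.map Coalgebra.comul LinearMap.id (Coalgebra.comul h)))

/-- Condition (c): `Σ S(h₍₁₎) P₁ S²(h₍₂₎) ⊗ P₂ = Σ P₁ ⊗ h₍₁₎ P₂ S(h₍₂₎)` for all `h`. -/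
def CondC (P : H ⊗[k] H) : Prop :=
  ∀ h : H,
    TensorProduct.map (adStar k H h) LinearMap.id P =
      TensorProduct.map LinearMap.id (adAct k H h) P

end HopfDefs

/-- `Φ_P(ξ) = (ξ ⊗ id)(P)`. -/
def PhiP (k H : Type*) [Field k] [Ring H] [HopfAlgebra k H]
    (P : H ⊗[k] H) (ξ : H →ₗ[k] k) : H :=
  TensorProduct.lid k H (TensorProduct.map ξ LinearMap.id P)


/-! In the convolution algebra of linear maps `H → H ⊗ H`, write `ι₁, ι₂` for the two inclusions
of `H` and `P·f`, `f·P` for pointwise multiplication by `P`. Condition (a) reads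
`(P·ι₁S²) * ι₂ = ι₁ * (ι₂·P)`. As `ι₁S` and `ι₂S` are convolution inverses of `ι₁` and `ι₂`,
this rearranges to `ι₁S * (P·ι₁S²) = (ι₂·P) * ι₂S`, i.e.
`Σ S(h₁)P₁S²(h₂) ⊗ P₂ = Σ P₁ ⊗ h₁P₂S(h₂)`, and applying `ξ ⊗ id` gives (i).

For (ii), a trace-like `ξ` satisfies `ξ(S(h₁) x S²(h₂)) = ξ(x S(h₁S(h₂))) = ε(h) ξ(x)`, so by (i)
`y = Φ_P(ξ)` satisfies `h₁ y S(h₂) = ε(h) y`. With `R_y`, `L_y` right and left multiplication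
by `y`, this says `R_y * S = R_y ∘ ηε` in the convolution algebra of `End H`; convolving on the
right with `id`, the inverse of `S`, gives `R_y = ηε * L_y = L_y`. -/

open Coalgebra WithConv

section Convolution

variable {R A C : Type*} [CommSemiring R] [Semiring A] [Algebra R A]
  [AddCommMonoid C] [Module R C] [CoalgebraStruct R C]

theorem LinearMap.mulLeft_comp_convMul (a : A) (f g : WithConv (C →ₗ[R] A)) :
    toConv (mulLeft R a ∘ₗ (f * g).ofConv) = toConv (mulLeft R a ∘ₗ f.ofConv) * g := by
  ext c
  simp [(ℛ R c).convMul_apply, mul_assoc]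

theorem LinearMap.mulRight_comp_convMul (a : A) (f g : WithConv (C →ₗ[R] A)) :
    toConv (mulRight R a ∘ₗ (f * g).ofConv) = f * toConv (mulRight R a ∘ₗ g.ofConv) := by
  ext c
  simp [(ℛ R c).convMul_apply, mul_assoc]

theorem LinearMap.mulRight_comp_convMul_eq_convMul_mulLeft_comp (a : A)
    (f g : WithConv (C →ₗ[R] A)) :
    toConv (mulRight R a ∘ₗ f.ofConv) * g = f * toConv (mulLeft R a ∘ₗ g.ofConv) := by
  ext c
  simp [(ℛ R c).convMul_apply, mul_assoc]

theorem LinearMap.includeLeft_comp_convMul_includeRight_comp {B : Type*} [Semiring B]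
    [Algebra R B] (f : C →ₗ[R] A) (g : C →ₗ[R] B) :
    toConv ((Algebra.TensorProduct.includeLeft : A →ₐ[R] A ⊗[R] B).toLinearMap ∘ₗ f) *
        toConv (Algebra.TensorProduct.includeRight.toLinearMap ∘ₗ g) =
      toConv (TensorProduct.map f g ∘ₗ comul) := by
  ext c
  simp [(ℛ R c).convMul_apply, ← (ℛ R c).eq]

end Convolution

theorem AlgHom.comp_convMul_comp_eq_one {R A B C : Type*} [CommSemiring R] [Semiring A]
    [Algebra R A] [Semiring B] [Algebra R B] [AddCommMonoid C] [Module R C] [Coalgebra R C]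
    (φ : A →ₐ[R] B) {f g : WithConv (C →ₗ[R] A)} (hfg : f * g = 1) :
    toConv (φ.toLinearMap ∘ₗ f.ofConv) * toConv (φ.toLinearMap ∘ₗ g.ofConv) = 1 := by
  rw [← toConv_ofConv (_ * _), ← LinearMap.algHom_comp_convMul_distrib, hfg]
  ext c
  simp

section Hopf

open LinearMap HopfAlgebra

variable {k H : Type*} [Field k] [Ring H] [HopfAlgebra k H]

local notation "ι₁" => AlgHom.toLinearMap (Algebra.TensorProduct.includeLeft : H →ₐ[k] H ⊗[k] H)
local notation "ι₂" => AlgHom.toLinearMap (Algebra.TensorProduct.includeRight : H →ₐ[k] H ⊗[k] H)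

theorem sandwich_tmul (a b x : H) : sandwich k H (a ⊗ₜ b) x = a * x * b := by
  simp [sandwich]

theorem adAct_apply_eq_convMul (h y : H) :
    adAct k H h y = (toConv (mulRight k y) * toConv (antipode k) : WithConv (H →ₗ[k] H)) h := by
  simp [adAct, (ℛ k h).convMul_apply, ← (ℛ k h).eq, sandwich_tmul, antip]

theorem mul_comm_of_adAct_eq_counit_smul {y : H}
    (hy : ∀ h, adAct k H h y = counit (R := k) h • y) (a : H) : y * a = a * y := by
  have hconv : (toConv (mulRight k y) * toConv (antipode k) : WithConv (H →ₗ[k] H)) =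
      toConv (mulRight k y ∘ₗ (1 : WithConv (H →ₗ[k] H)).ofConv) := by
    ext h
    rw [← adAct_apply_eq_convMul, hy]
    simp [Algebra.smul_def]
  have : (toConv (mulRight k y) : WithConv (H →ₗ[k] H)) = toConv (mulLeft k y) := calc
    (toConv (mulRight k y) : WithConv (H →ₗ[k] H)) =
        toConv (mulRight k y) * (toConv (antipode k) * toConv .id) := by
      rw [antipode_mul_id, mul_one]
    _ = toConv (mulRight k y ∘ₗ (1 : WithConv (H →ₗ[k] H)).ofConv) * toConv .id := by
      rw [← mul_assoc, hconv]
    _ = 1 * toConv (mulLeft k y ∘ₗ LinearMap.id) :=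
      mulRight_comp_convMul_eq_convMul_mulLeft_comp _ _ _
    _ = toConv (mulLeft k y) := one_mul _
  simpa using congr(ofConv $this a).symm

theorem map_adStar_id_eq_convMul (P : H ⊗[k] H) (h : H) :
    TensorProduct.map (adStar k H h) LinearMap.id P =
      (toConv (ι₁ ∘ₗ antipode k) * toConv (mulLeft k P ∘ₗ ι₁ ∘ₗ antipSq k H) :
        WithConv (H →ₗ[k] H ⊗[k] H)) h := by
  rw [(ℛ k h).convMul_apply, adStar, ← (ℛ k h).eq]
  induction P using TensorProduct.induction_on with
  | zero => simp
  | tmul x y => simp [TensorProduct.sum_tmul, sandwich_tmul, antip, antipSq, mul_assoc]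
  | add x y hx hy => simp_all [mul_add, add_mul, Finset.sum_add_distrib]

theorem map_id_adAct_eq_convMul (P : H ⊗[k] H) (h : H) :
    TensorProduct.map LinearMap.id (adAct k H h) P =
      (toConv (mulRight k P ∘ₗ ι₂) * toConv (ι₂ ∘ₗ antipode k) :
        WithConv (H →ₗ[k] H ⊗[k] H)) h := by
  rw [(ℛ k h).convMul_apply, adAct, ← (ℛ k h).eq]
  induction P using TensorProduct.induction_on with
  | zero => simp
  | tmul x y => simp [TensorProduct.tmul_sum, sandwich_tmul, antip]
  | add x y hx hy => simp_all [mul_add, add_mul, Finset.sum_add_distrib]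

theorem condC_of_condA {P : H ⊗[k] H} (hP : CondA k H P) : CondC k H P := by
  set a := toConv (ι₁ ∘ₗ antipode k)
  set u := toConv (ι₁ ∘ₗ LinearMap.id)
  set b := toConv (ι₂ ∘ₗ LinearMap.id)
  set d := toConv (ι₂ ∘ₗ antipode k)
  set L := toConv (mulLeft k P ∘ₗ ι₁ ∘ₗ antipSq k H)
  set R := toConv (mulRight k P ∘ₗ ι₂ ∘ₗ LinearMap.id)
  have hLR : L * b = u * R := by
    have hL :
        L * b = toConv (mulLeft k P ∘ₗ TensorProduct.map (antipSq k H) .id ∘ₗ comul) := by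
      have := mulLeft_comp_convMul P (toConv (ι₁ ∘ₗ antipSq k H)) b
      rwa [includeLeft_comp_convMul_includeRight_comp, eq_comm] at this
    have hR : u * R = toConv (mulRight k P ∘ₗ TensorProduct.map .id .id ∘ₗ comul) := by
      have := mulRight_comp_convMul P u b
      rwa [includeLeft_comp_convMul_includeRight_comp, eq_comm] at this
    rw [hL, hR]
    ext h
    simpa using hP h
  have hau : a * u = 1 := AlgHom.comp_convMul_comp_eq_one _ antipode_mul_id
  have hbd : b * d = 1 := AlgHom.comp_convMul_comp_eq_one _ id_mul_antipode
  have key : a * L = R * d := calc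
    a * L = a * (L * b) * d := by rw [mul_assoc, mul_assoc, hbd, mul_one]
    _ = (a * u) * R * d := by simp only [hLR, mul_assoc]
    _ = R * d := by rw [hau, one_mul]
  intro h
  rw [map_adStar_id_eq_convMul, map_id_adAct_eq_convMul]
  exact congr(ofConv $key h)

theorem comp_adStar_eq_counit_smul {ξ : H →ₗ[k] k} (hξ : ∀ a b : H, ξ (a * b) = ξ (b * a))
    (h : H) : ξ ∘ₗ adStar k H h = counit (R := k) h • ξ := by
  ext x
  let r := ℛ k h
  calc ξ (adStar k H h x)
      = ∑ i ∈ r.index, ξ (x * antipode k (r.left i * antipode k (r.right i))) := by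
        simp only [adStar, ← r.eq, map_sum, TensorProduct.map_tmul, LinearMap.coe_sum,
          Finset.sum_apply, sandwich_tmul, antip, antipSq, LinearMap.comp_apply,
          antipode_mul_antidistrib]
        refine Finset.sum_congr rfl fun i _ => ?_
        rw [mul_assoc, hξ, mul_assoc]
    _ = ξ (x * antipode k (counit (R := k) h • 1)) := by
        rw [← sum_mul_antipode_eq_smul r, map_sum, Finset.mul_sum, map_sum]
    _ = (counit (R := k) h • ξ) x := by simp

theorem PhiP_comp (P : H ⊗[k] H) (ξ : H →ₗ[k] k) (f : H →ₗ[k] H) :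
    PhiP k H P (ξ ∘ₗ f) = PhiP k H (TensorProduct.map f LinearMap.id P) ξ := by
  rw [PhiP, PhiP, ← LinearMap.comp_apply (TensorProduct.map ξ _), ← TensorProduct.map_comp,
    LinearMap.id_comp]

theorem PhiP_map_id (P : H ⊗[k] H) (ξ : H →ₗ[k] k) (g : H →ₗ[k] H) :
    PhiP k H (TensorProduct.map LinearMap.id g P) ξ = g (PhiP k H P ξ) := by
  induction P using TensorProduct.induction_on with
  | zero => simp [PhiP]
  | tmul x y => simp [PhiP]
  | add x y hx hy => simp_all [PhiP]

theorem PhiP_smul (P : H ⊗[k] H) (c : k) (ξ : H →ₗ[k] k) :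
    PhiP k H P (c • ξ) = c • PhiP k H P ξ := by
  simp [PhiP, TensorProduct.map_smul_left]

theorem PhiP_comp_adStar {P : H ⊗[k] H} (hP : CondC k H P) (h : H) (ξ : H →ₗ[k] k) :
    PhiP k H P (ξ ∘ₗ adStar k H h) = adAct k H h (PhiP k H P ξ) := by
  rw [PhiP_comp, hP h, PhiP_map_id]

end Hopf

theorem stmt15 (k H : Type*) [Field k] [Ring H] [HopfAlgebra k H]
    (P : H ⊗[k] H) (hP : CondA k H P) :
    (∀ (h : H) (ξ : H →ₗ[k] k),
      PhiP k H P (ξ ∘ₗ (adStar k H h : H →ₗ[k] H)) = adAct k H h (PhiP k H P ξ)) ∧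
    (∀ ξ : H →ₗ[k] k, (∀ a b : H, ξ (a * b) = ξ (b * a)) →
      ∀ a : H, PhiP k H P ξ * a = a * PhiP k H P ξ) := by
  have hC := condC_of_condA hP
  refine ⟨PhiP_comp_adStar hC, fun ξ hξ => ?_⟩
  refine mul_comm_of_adAct_eq_counit_smul (k := k) fun h => ?_
  rw [← PhiP_comp_adStar hC, comp_adStar_eq_counit_smul hξ, PhiP_smul]
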